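/- If h is a strictly increasing apart sequence of positive naturals, then the sets H₁ = {λ(h i) : i ∈ ℕ} and H₂ = {μ(h i) : i ∈ ℕ} are both infinite, and their increasing enumerations are given by λ(h 1), λ(h 2), ... and μ(h 1), μ(h 2), ... respectively; in particular λ(h 1) ≤ μ(h 1) < λ(h 2) ≤ μ(h 2) < ... -/

import Mathlib

/-- λ(n): the 2-adic valuation of n (least exponent in binary expansion). -/
def lam (n : ℕ) : ℕ := padicValNat 2 n

/-- μ(n): ⌊log₂ n⌋ (greatest exponent in binary expansion). -/
def mu (n : ℕ) : ℕ := Nat.log 2 n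

/-- Apartness condition for a sequence. -/
def Apart (h : ℕ → ℕ) : Prop := ∀ i j, i < j → mu (h i) < lam (h j)

/-- Sum of adjacent elements h i + h (i+1) + ... + h j. -/
def adjSum (h : ℕ → ℕ) (i j : ℕ) : ℕ := ∑ t ∈ Finset.Icc i j, h t

/-! Since `2 ^ λ(n)` divides `n`, it is at most `n`, so `λ(n) ≤ μ(n)`; apartness interleaves
the two sequences, `λ(h i) ≤ μ(h i) < λ(h j) ≤ μ(h j)` for `i < j`, which makes both strictly
increasing and hence their ranges infinite. -/

lemma lam_le_mu {n : ℕ} (hn : 0 < n) : lam n ≤ mu n :=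
  Nat.le_log_of_pow_le one_lt_two (Nat.le_of_dvd hn pow_padicValNat_dvd)

lemma infinite_setOf_exists_eq_of_injective {α β : Type*} [Infinite α] {f : α → β}
    (hf : Function.Injective f) : {x | ∃ i, x = f i}.Infinite := by
  simpa only [Set.range, eq_comm] using Set.infinite_range_of_injective hf

namespace Apart

variable {h : ℕ → ℕ}

lemma mu_lt_lam_succ (hap : Apart h) (i : ℕ) : mu (h i) < lam (h (i + 1)) :=
  hap i (i + 1) i.lt_succ_self

lemma strictMono_lam (hap : Apart h) (hpos : ∀ i, 0 < h i) : StrictMono (fun i => lam (h i)) :=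
  fun i j hij => (lam_le_mu (hpos i)).trans_lt (hap i j hij)

lemma strictMono_mu (hap : Apart h) (hpos : ∀ i, 0 < h i) : StrictMono (fun i => mu (h i)) :=
  fun i j hij => (hap i j hij).trans_le (lam_le_mu (hpos j))

end Apart

theorem lam_mu_enumeration_general (h : ℕ → ℕ) (hpos : ∀ i, 0 < h i)
    (hap : Apart h) :
    {x | ∃ i, x = lam (h i)}.Infinite ∧ {x | ∃ i, x = mu (h i)}.Infinite ∧
    StrictMono (fun i => lam (h i)) ∧ StrictMono (fun i => mu (h i)) ∧
    (∀ i, lam (h i) ≤ mu (h i)) ∧ (∀ i, mu (h i) < lam (h (i + 1))) :=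
  ⟨infinite_setOf_exists_eq_of_injective (hap.strictMono_lam hpos).injective,
    infinite_setOf_exists_eq_of_injective (hap.strictMono_mu hpos).injective,
    hap.strictMono_lam hpos, hap.strictMono_mu hpos, fun i => lam_le_mu (hpos i),
    hap.mu_lt_lam_succ⟩

theorem lam_mu_enumeration (h : ℕ → ℕ) (hmono : StrictMono h) (hpos : ∀ i, 0 < h i)
    (hap : Apart h) :
    {x | ∃ i, x = lam (h i)}.Infinite ∧ {x | ∃ i, x = mu (h i)}.Infinite ∧
    StrictMono (fun i => lam (h i)) ∧ StrictMono (fun i => mu (h i)) ∧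
    (∀ i, lam (h i) ≤ mu (h i)) ∧ (∀ i, mu (h i) < lam (h (i + 1))) :=
  lam_mu_enumeration_general h hpos hap
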